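/- arXiv:2601.10870 — 2 statements merged into one kernel-verified Lean document; each statement's English description precedes it below -/
import Mathlib

section
/- Let n ≥ 1 be an integer. Then det(K_{i,j})_{1≤i,j≤n} = 4^{n(n−1)/2} · n!, where K_{i,j} = Σ_{k = −n+1}^{n} k · C(2j + k − 3, i − 1) · C(n, j + k − 1) is an integer matrix. -/
/-!
Substituting `m = j + k`, column `j` of `K` (indices from `0`, `n = N + 1`) becomes
`∑ₘ (m - j) C(n, m) C(m + j - 1, i)`, the coefficient vector of
`∑ₘ (m - j) C(n, m) (X + 1)^(m + j - 1) = (X + 2)^N ((n - j)(X + 1)^j - j (X + 1)^(j - 1))`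
by the binomial theorem and its derivative. Multiplication by `(X + 2)^N` is a lower triangular
Toeplitz matrix with diagonal `2^N`, and the second factor has degree `≤ j` and leading
coefficient `n - j`, so `det K = 2^(N n) ∏ⱼ (n - j) = 4^(n(n-1)/2) n!`.
-/

open Finset

/-- Binomial coefficient of two integers, with `C a 0 = 1` for every integer `a`,
and `C a b = 0` whenever `b < 0` or (`b > 0` and `b > a`). -/
def intChoose (a b : ℤ) : ℤ :=
  if b = 0 then 1 else if 0 < b ∧ b ≤ a then (a.toNat.choose b.toNat : ℤ) else 0

open Polynomial
open scoped Nat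

theorem intChoose_natCast (a b : ℕ) : intChoose a b = a.choose b := by
  unfold intChoose
  split_ifs with hb hab
  · simp [Nat.cast_eq_zero.1 hb]
  · simp
  · rw [Nat.choose_eq_zero_of_lt (by omega), Nat.cast_zero]

theorem intChoose_eq_zero_of_lt {a : ℕ} {b : ℤ} (h : b < 0 ∨ (a : ℤ) < b) :
    intChoose a b = 0 := by
  unfold intChoose
  split_ifs <;> omega

section BinomialSums

variable {R : Type*} [CommRing R]

theorem sum_range_choose_mul_pow (n : ℕ) (y : R) :
    ∑ m ∈ range (n + 1), (n.choose m : R) * y ^ m = (y + 1) ^ n := by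
  simp [add_pow, mul_comm]

theorem sum_range_succ_mul_choose_succ_mul_pow (N : ℕ) (y : R) :
    ∑ m ∈ range (N + 1), ((m + 1 : ℕ) : R) * ((N + 1).choose (m + 1) : R) * y ^ m
      = (N + 1) * (y + 1) ^ N := by
  have hchoose (m : ℕ) :
      ((m + 1 : ℕ) : R) * ((N + 1).choose (m + 1) : R) = (N + 1) * N.choose m := by
    rw [← Nat.cast_mul, mul_comm, ← N.add_one_mul_choose_eq m, Nat.cast_mul, Nat.cast_succ]
  simp only [hchoose, mul_assoc, ← mul_sum, sum_range_choose_mul_pow]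

theorem sum_range_mul_choose_mul_pow (N : ℕ) (y : R) :
    ∑ m ∈ range (N + 2), (m : R) * (N + 1).choose m * y ^ m = (N + 1) * y * (y + 1) ^ N := by
  simp only [sum_range_succ' _ (N + 1), pow_succ, ← mul_assoc, ← sum_mul,
    sum_range_succ_mul_choose_succ_mul_pow, Nat.cast_zero, zero_mul, add_zero]
  ring

theorem sum_range_sub_mul_choose_mul_pow (N j : ℕ) (y : R) :
    ∑ m ∈ range (N + 2), ((m : R) - j) * ((N + 1).choose m : R) * y ^ (m + j - 1)
      = (y + 1) ^ N * (((N : R) + 1 - j) * y ^ j - j * y ^ (j - 1)) := by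
  cases j with
  | zero =>
    simp only [sum_range_succ' _ (N + 1), Nat.cast_zero, sub_zero, zero_mul, add_zero,
      Nat.add_sub_cancel, sum_range_succ_mul_choose_succ_mul_pow]
    ring
  | succ j =>
    have hsplit (m : ℕ) :
        ((m : R) - (j + 1 : ℕ)) * ((N + 1).choose m : R) * y ^ (m + (j + 1) - 1)
          = y ^ j * ((m : R) * (N + 1).choose m * y ^ m
              - (j + 1) * ((N + 1).choose m * y ^ m)) := by
      rw [show m + (j + 1) - 1 = m + j by omega, pow_add]
      push_cast
      ring
    simp only [hsplit, ← mul_sum, sum_sub_distrib, sum_range_mul_choose_mul_pow,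
      sum_range_choose_mul_pow (N + 1)]
    push_cast
    ring

end BinomialSums

section CoeffMatrix

variable {R : Type*} [CommRing R] {n : ℕ}

def coeffMatrix (q : Fin n → R[X]) : Matrix (Fin n) (Fin n) R :=
  Matrix.of fun i j => (q j).coeff i

/-- Multiplication by `p` on polynomials truncated below degree `n`. -/
def truncMulMatrix (n : ℕ) (p : R[X]) : Matrix (Fin n) (Fin n) R :=
  Matrix.of fun i t => if t ≤ i then p.coeff (i - t) else 0

theorem coeffMatrix_mul_left (p : R[X]) (q : Fin n → R[X]) :
    coeffMatrix (fun j => p * q j) = truncMulMatrix n p * coeffMatrix q := by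
  ext i j
  have hi : (i : ℕ) + 1 ≤ n := i.isLt
  simp only [coeffMatrix, truncMulMatrix, Matrix.mul_apply, Matrix.of_apply, mul_comm p,
    coeff_mul, Nat.sum_antidiagonal_eq_sum_range_succ_mk, Fin.le_iff_val_le_val]
  rw [Fin.sum_univ_eq_sum_range (fun t => (if t ≤ i then p.coeff (i - t) else 0) * (q j).coeff t),
    ← sum_subset (range_subset_range.2 hi) fun t _ ht => by
      rw [if_neg (by simpa [Nat.lt_succ_iff] using ht), zero_mul]]
  refine sum_congr rfl fun t ht => ?_
  rw [if_pos (Nat.lt_succ_iff.1 (mem_range.1 ht)), mul_comm]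

theorem det_truncMulMatrix (p : R[X]) : (truncMulMatrix n p).det = p.coeff 0 ^ n := by
  rw [Matrix.det_of_isLowerTriangular (truncMulMatrix n p) fun i t (h : i < t) =>
    if_neg (not_le.2 h)]
  simp [truncMulMatrix]

theorem det_coeffMatrix_of_natDegree_le {q : Fin n → R[X]} (hq : ∀ j, (q j).natDegree ≤ j) :
    (coeffMatrix q).det = ∏ j, (q j).coeff j :=
  Matrix.det_of_isUpperTriangular fun i j (h : j < i) =>
    coeff_eq_zero_of_natDegree_lt ((hq j).trans_lt h)

end CoeffMatrix

theorem sum_Icc_mul_intChoose_mul_intChoose (N i j : ℕ) (hj : j ≤ N) :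
    ∑ k ∈ Icc (-((N + 1 : ℕ) : ℤ) + 1) ((N + 1 : ℕ) : ℤ),
        k * intChoose (2 * ((j : ℤ) + 1) + k - 3) (((i : ℤ) + 1) - 1) *
          intChoose ((N + 1 : ℕ) : ℤ) (((j : ℤ) + 1) + k - 1)
      = ∑ m ∈ range (N + 2), ((m : ℤ) - j) * (N + 1).choose m * (m + j - 1).choose i := by
  rw [← sum_subset (s₁ := (range (N + 2)).image fun m : ℕ => (m : ℤ) - j),
    sum_image fun a _ b _ h => by simpa using h]
  · refine sum_congr rfl fun m _ => ?_
    rw [show ((j : ℤ) + 1) + (m - j) - 1 = m by ring, intChoose_natCast, add_sub_cancel_right]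
    rcases Nat.eq_zero_or_pos (m + j) with h | h
    · obtain ⟨rfl, rfl⟩ : m = 0 ∧ j = 0 := by omega
      simp
    · rw [show 2 * ((j : ℤ) + 1) + (m - j) - 3 = ((m + j - 1 : ℕ) : ℤ) by push_cast [h]; ring,
        intChoose_natCast]
      ring
  · intro k hk
    simp only [mem_image, mem_range, mem_Icc] at hk ⊢
    omega
  · intro k _ hk
    simp only [mem_image, mem_range, not_exists, not_and] at hk
    rw [intChoose_eq_zero_of_lt, mul_zero]
    by_contra! h
    exact hk (k + j).toNat (by omega) (by omega)

/-- Column `j` of the matrix is the coefficient vector of `(X + 2) ^ N * colPoly N j`. -/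
noncomputable def colPoly (N j : ℕ) : ℤ[X] :=
  C ((N : ℤ) + 1 - j) * (X + 1) ^ j - C (j : ℤ) * (X + 1) ^ (j - 1)

theorem natDegree_colPoly_le (N j : ℕ) : (colPoly N j).natDegree ≤ j :=
  (natDegree_sub_le _ _).trans <| max_le
    ((natDegree_C_mul_le _ _).trans (by compute_degree!))
    ((natDegree_C_mul_le _ _).trans (by compute_degree!))

theorem coeff_colPoly_self (N j : ℕ) : (colPoly N j).coeff j = (N : ℤ) + 1 - j := by
  rw [colPoly, coeff_sub, coeff_C_mul, coeff_C_mul, coeff_X_add_one_pow, coeff_X_add_one_pow,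
    Nat.choose_self]
  cases j <;> simp

theorem sum_range_sub_mul_choose_mul_choose_eq_coeff (N i j : ℕ) :
    ∑ m ∈ range (N + 2), ((m : ℤ) - j) * (N + 1).choose m * (m + j - 1).choose i
      = ((X + 2) ^ N * colPoly N j).coeff i := by
  simp only [colPoly, map_sub, map_add, map_natCast, map_one]
  rw [show (X + 2 : ℤ[X]) = X + 1 + 1 by ring, ← sum_range_sub_mul_choose_mul_pow,
    finsetSum_coeff]
  refine sum_congr rfl fun m _ => ?_
  rw [← coeff_X_add_one_pow ℤ (m + j - 1) i, ← coeff_C_mul]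
  simp

theorem prod_univ_fin_sub_eq_factorial (n : ℕ) : ∏ j : Fin n, ((n : ℤ) - j) = n ! := calc
  ∏ j : Fin n, ((n : ℤ) - j) = ∏ j : Fin n, (((Fin.revPerm j : ℕ) : ℤ) + 1) :=
    prod_congr rfl fun j _ => by rw [Fin.revPerm_apply, Fin.val_rev]; omega
  _ = ∏ j : Fin n, ((j : ℤ) + 1) := Equiv.prod_comp Fin.revPerm fun j : Fin n => (j : ℤ) + 1
  _ = n ! := by
    rw [Fin.prod_univ_eq_prod_range (fun j => (j : ℤ) + 1)]
    exact_mod_cast prod_range_add_one_eq_factorial n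

theorem det_K_eq_four_pow_mul_factorial (n : ℕ) (hn : 1 ≤ n) :
    (Matrix.of fun i j : Fin n =>
      ∑ k ∈ Finset.Icc (-(n : ℤ) + 1) (n : ℤ),
        k * intChoose (2 * ((j : ℤ) + 1) + k - 3) (((i : ℤ) + 1) - 1) *
          intChoose (n : ℤ) (((j : ℤ) + 1) + k - 1)).det
    = 4 ^ (n * (n - 1) / 2) * (n.factorial : ℤ) := by
  obtain ⟨N, rfl⟩ : ∃ N, n = N + 1 := ⟨n - 1, by omega⟩
  calc _ = (coeffMatrix fun j : Fin (N + 1) => (X + 2) ^ N * colPoly N j).det := by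
        congr 1
        ext i j
        rw [coeffMatrix, Matrix.of_apply, Matrix.of_apply,
          sum_Icc_mul_intChoose_mul_intChoose N i j (Nat.lt_succ_iff.1 j.isLt),
          sum_range_sub_mul_choose_mul_choose_eq_coeff]
    _ = (2 ^ N) ^ (N + 1) * ∏ j : Fin (N + 1), ((N + 1 : ℕ) - (j : ℤ)) := by
        rw [coeffMatrix_mul_left, Matrix.det_mul, det_truncMulMatrix,
          det_coeffMatrix_of_natDegree_le fun j => natDegree_colPoly_le N j]
        simp [coeff_zero_eq_eval_zero, coeff_colPoly_self]
    _ = _ := by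
        rw [prod_univ_fin_sub_eq_factorial, ← pow_mul, show (4 : ℤ) = 2 ^ 2 by norm_num,
          ← pow_mul, Nat.mul_div_cancel' (Nat.even_mul_pred_self _).two_dvd, Nat.add_sub_cancel,
          mul_comm N]
end

section
/- Let n ≥ 1 be an integer and let q, v_1, …, v_n, u_1, …, u_n be complex numbers such that q ≠ 1, the v_i are pairwise distinct, the u_j are pairwise distinct, and v_i ≠ u_j and q·v_i ≠ u_j for all 1 ≤ i, j ≤ n. Set Δ(V) = Π_{1≤i<j≤n}(v_i − v_j) and Δ(U) = Π_{1≤i<j≤n}(u_i − u_j). For an integer m, let h_m(V) be the complete homogeneous symmetric polynomial of degree m evaluated at v_1, …, v_n (with h_0(V) = 1 and h_m(V) = 0 for m < 0), and let e_m(U) be the elementary symmetric polynomial of degree m evaluated at u_1, …, u_n (with e_0(U) = 1 and e_m(U) = 0 for m < 0 or m > n). Then (−1)^{n(n−1)/2} · det( 1/((v_i − u_j)(q·v_i − u_j)) )_{1≤i,j≤n} · Π_{1≤i,j≤n}(v_i − u_j)(q·v_i − u_j) / (Δ(V)·Δ(U)) = det(P·Q), where P is the n×(2n−1) matrix with P_{i,j}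 = h_{j−i}(V) (1 ≤ i ≤ n, 1 ≤ j ≤ 2n−1) and Q is the (2n−1)×n matrix with Q_{j,k} = ((q^{j−k+1} − q^{k−1})/(q − 1)) · (−1)^{n−j+k−1} · e_{n−j+k−1}(U) (1 ≤ j ≤ 2n−1, 1 ≤ k ≤ n). -/
open Finset

/-- The complete homogeneous symmetric polynomial of degree `m`, evaluated at
`v 0, …, v (n-1)`: the sum of all monomials of total degree `m`. -/
noncomputable def hsymVal {n : ℕ} (v : Fin n → ℂ) (m : ℕ) : ℂ :=
  ∑ s : Sym (Fin n) m, ((s : Multiset (Fin n)).map v).prod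

/-- The complete homogeneous symmetric polynomial with integer degree:
`0` in negative degrees. -/
noncomputable def hsymZ {n : ℕ} (v : Fin n → ℂ) (m : ℤ) : ℂ :=
  if m < 0 then 0 else hsymVal v m.toNat

/-- The elementary symmetric polynomial of degree `m`, evaluated at
`u 0, …, u (n-1)`: the sum of all products of `m` distinct variables. -/
noncomputable def esymVal {n : ℕ} (u : Fin n → ℂ) (m : ℕ) : ℂ :=
  ∑ s ∈ Finset.univ.powersetCard m, ∏ j ∈ s, u j

/-- The elementary symmetric polynomial with integer degree: `0` in negative degrees. -/
noncomputable def esymZ {n : ℕ} (u : Fin n → ℂ) (m : ℤ) : ℂ :=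
  if m < 0 then 0 else esymVal u m.toNat

/-!
Write `w_l(v) = ∏_{m ≠ l} (v_l - v_m)` and `V_{lj} = v_l ^ j`. Partial fractions of
`∏_l 1 / (1 - v_l t)` give `h_m(v) = ∑_l v_l ^ (m + n - 1) / w_l(v)`, that is `P = A V` with
`A_{il} = v_l ^ (n - 1 - i) / w_l(v)`. The `k`-th column of `Q` lists the coefficients of
`∑_b u_b ^ k / w_b(u) · ∏_{i ≠ b} (x - u_i)(q x - u_i)`, a polynomial which `(q - 1) x` multiplies
to `x ^ k (∏_i (q x - u_i) - q ^ k ∏_i (x - u_i))`; hence `V Q = W T` with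
`W_{lb} = ∏_{i ≠ b} (v_l - u_i)(q v_l - u_i)` and `T_{bk} = u_b ^ k / w_b(u)`. Finally `W` is a
diagonal matrix times `(1 / ((v_l - u_b)(q v_l - u_b)))_{lb}`, and `det A`, `det T` are inverse
Vandermonde determinants.
-/

open Polynomial

variable {K : Type*} [Field K] {n : ℕ}

theorem Lagrange.X_pow_eq_sum {u : Fin n → K} (hu : Function.Injective u) {k : ℕ} (hk : k < n) :
    (X ^ k : K[X]) =
      ∑ b, C (u b ^ k / ∏ j ∈ univ.erase b, (u b - u j)) * nodal (univ.erase b) u := by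
  have h := eq_interpolate (s := univ) (f := (X ^ k : K[X])) hu.injOn (by simpa using hk)
  rw [interpolate_eq_sum] at h
  simp only [eval_pow, eval_X] at h
  simpa only [nodal_eq] using h

/-- The Lagrange identity for `X ^ (n - 1)`, read at `x⁻¹` and multiplied by `x ^ (n - 1)`. -/
theorem sum_C_pow_div_mul_prod_one_sub_C_mul_X_eq_one [Infinite K] {v : Fin n → K}
    (hv : Function.Injective v) (hn : 0 < n) :
    ∑ l, C (v l ^ (n - 1) / ∏ m ∈ univ.erase l, (v l - v m)) *
      ∏ m ∈ univ.erase l, (1 - C (v m) * X) = 1 := by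
  refine eq_of_infinite_eval_eq _ _ ((Set.finite_singleton 0).infinite_compl.mono fun x hx => ?_)
  have hx : x ≠ 0 := hx
  have hrev : ∀ l, ∏ m ∈ univ.erase l, (1 - v m * x) =
      x ^ (n - 1) * ∏ m ∈ univ.erase l, (x⁻¹ - v m) := fun l => by
    have hcard : #(univ.erase l) = n - 1 := by simp
    rw [← hcard, ← prod_const, ← prod_mul_distrib]
    exact prod_congr rfl fun m _ => by field_simp
  have hlag := congrArg (eval x⁻¹) (Lagrange.X_pow_eq_sum hv (Nat.sub_lt hn one_pos))
  simp only [eval_pow, eval_X, eval_finsetSum, eval_mul, eval_C, Lagrange.eval_nodal] at hlag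
  simp only [Set.mem_ofPred_eq, eval_finsetSum, eval_mul, eval_C, eval_prod, eval_sub, eval_one,
    eval_X, hrev]
  rw [← mul_inv_cancel₀ (pow_ne_zero (n - 1) hx), ← inv_pow, hlag, mul_sum]
  exact sum_congr rfl fun l _ => by ring

theorem PowerSeries.one_sub_C_mul_X_mul_mk_pow {R : Type*} [CommRing R] (a : R) :
    (1 - C a * X) * mk (fun m => a ^ m) = 1 := by
  ext (_ | m)
  · simp
  · simp [sub_mul, mul_assoc, coeff_succ_X_mul, pow_succ']

theorem hsymVal_eq_sum_finsuppAntidiag (v : Fin n → ℂ) (d : ℕ) :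
    hsymVal v d = ∑ f ∈ finsuppAntidiag univ d, ∏ i, v i ^ f i := by
  classical
  let _ := Fintype.ofEquiv _ (Sym.equivNatSum (Fin n) d)
  rw [hsymVal, ← (Sym.equivNatSum (Fin n) d).symm.sum_comp,
    sum_subtype (finsuppAntidiag univ d) (p := fun f => f.sum (fun _ => id) = d)
      (fun f => by simp [mem_finsuppAntidiag, Finsupp.sum_fintype])]
  refine Fintype.sum_congr _ _ fun f => ?_
  rw [Sym.coe_equivNatSum_symm_apply, Finsupp.toMultiset_map, Finsupp.prod_toMultiset,
    Finsupp.prod_mapDomain_index (fun _ => pow_zero _) (fun _ _ _ => pow_add _ _ _),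
    Finsupp.prod_fintype _ _ (fun _ => pow_zero _)]

theorem PowerSeries.mk_hsymVal_eq_prod (v : Fin n → ℂ) :
    mk (hsymVal v) = ∏ l, mk fun m => v l ^ m := by
  ext d
  rw [coeff_mk, coeff_prod, hsymVal_eq_sum_finsuppAntidiag]
  simp only [coeff_mk]

theorem PowerSeries.mk_hsymVal_eq_sum {v : Fin n → ℂ} (hv : Function.Injective v) (hn : 0 < n) :
    mk (hsymVal v) =
      ∑ l, C (v l ^ (n - 1) / ∏ m ∈ univ.erase l, (v l - v m)) * mk fun d => v l ^ d := by
  have hpf := congrArg Polynomial.coeToPowerSeries.ringHom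
    (sum_C_pow_div_mul_prod_one_sub_C_mul_X_eq_one hv hn)
  simp only [map_sum, map_mul, map_prod, map_sub, map_one,
    Polynomial.coeToPowerSeries.ringHom_apply, Polynomial.coe_C, Polynomial.coe_X] at hpf
  rw [mk_hsymVal_eq_prod, ← one_mul (∏ l, _), ← hpf, sum_mul]
  refine sum_congr rfl fun l _ => ?_
  have hcancel : (∏ m ∈ univ.erase l, (1 - C (v m) * X)) *
      ∏ m ∈ univ.erase l, mk (fun d => v m ^ d) = 1 := by
    simp only [← prod_mul_distrib, one_sub_C_mul_X_mul_mk_pow, prod_const_one]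
  rw [← mul_prod_erase univ _ (mem_univ l)]
  linear_combination
    (C (v l ^ (n - 1) / ∏ m ∈ univ.erase l, (v l - v m)) * mk fun d => v l ^ d) * hcancel

theorem sum_pow_div_prod_erase_sub_eq_hsymZ {v : Fin n → ℂ} (hv : Function.Injective v)
    (hn : 0 < n) (s : ℕ) :
    ∑ l, v l ^ s / ∏ m ∈ univ.erase l, (v l - v m) = hsymZ v ((s : ℤ) - n + 1) := by
  rcases lt_or_ge (s + 1) n with hs | hs
  · have hcoeff := Lagrange.coeff_eq_sum (s := univ) (P := (X ^ s : ℂ[X])) hv.injOn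
      (by simp; omega)
    rw [hsymZ, if_pos (by omega)]
    simpa [coeff_X_pow, show n - 1 ≠ s by omega] using hcoeff.symm
  · obtain ⟨d, rfl⟩ : ∃ d, s = n - 1 + d := ⟨s - (n - 1), by omega⟩
    have hcoeff := congrArg (PowerSeries.coeff d) (PowerSeries.mk_hsymVal_eq_sum hv hn)
    simp only [PowerSeries.coeff_mk, map_sum, PowerSeries.coeff_C_mul] at hcoeff
    rw [hsymZ, if_neg (by omega), show ((n - 1 + d : ℕ) : ℤ) - n + 1 = d by omega,
      Int.toNat_natCast, hcoeff]
    exact sum_congr rfl fun l _ => by ring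

theorem esymVal_eq_zero_of_lt (u : Fin n → ℂ) {m : ℕ} (hm : n < m) : esymVal u m = 0 := by
  rw [esymVal, powersetCard_eq_empty.2 (by simpa using hm), sum_empty]

theorem coeff_nodal_univ_eq_esymZ (u : Fin n → ℂ) (m : ℕ) :
    (Lagrange.nodal univ u).coeff m = (-1) ^ ((n : ℤ) - m) * esymZ u (n - m) := by
  rcases le_or_gt m n with hm | hm
  · have hvieta := Multiset.prod_X_sub_C_coeff (univ.val.map u) (k := m) (by simpa using hm)
    rw [Multiset.map_map, Multiset.card_map, card_val, card_univ, Fintype.card_fin,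
      esymm_map_val] at hvieta
    rw [Lagrange.nodal_eq, prod_eq_multiset_prod, ← Function.comp_def (fun t => X - C t) u,
      hvieta, esymZ, if_neg (by omega), show (n : ℤ) - m = ((n - m : ℕ) : ℤ) by omega,
      zpow_natCast, Int.toNat_natCast, esymVal]
  · rw [coeff_eq_zero_of_natDegree_lt (by simpa [Lagrange.natDegree_nodal] using hm), esymZ,
      if_pos (by omega), mul_zero]

open Lagrange in
/-- Each summand telescopes, since `(q - 1) X = (q X - u_b) - (X - u_b)`; what remains is the
Lagrange identity for `X ^ k` at `X` and at `q X`. -/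
theorem C_mul_X_mul_sum_nodal_erase_mul_comp {u : Fin n → K} (hu : Function.Injective u)
    {k : ℕ} (hk : k < n) (q : K) :
    C (q - 1) * X * ∑ b, C (u b ^ k / ∏ j ∈ univ.erase b, (u b - u j)) *
        (nodal (univ.erase b) u * (nodal (univ.erase b) u).comp (C q * X)) =
      X ^ k * ((nodal univ u).comp (C q * X) - C (q ^ k) * nodal univ u) := by
  set c : Fin n → K := fun b => u b ^ k / ∏ j ∈ univ.erase b, (u b - u j)
  set P := nodal univ u
  set Pq := P.comp (C q * X)
  have hsplit : ∀ b, C (q - 1) * X *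
      (nodal (univ.erase b) u * (nodal (univ.erase b) u).comp (C q * X)) =
        nodal (univ.erase b) u * Pq - P * (nodal (univ.erase b) u).comp (C q * X) := fun b => by
    have hP : P = (X - C (u b)) * nodal (univ.erase b) u := nodal_eq_mul_nodal_erase (mem_univ b)
    simp only [Pq]
    rw [hP, mul_comp, sub_comp, X_comp, C_comp, map_sub, map_one]
    ring
  have hlag_comp := congrArg (·.comp (C q * X)) (X_pow_eq_sum hu hk)
  simp only [X_pow_comp, Polynomial.sum_comp, mul_comp, C_comp] at hlag_comp
  calc C (q - 1) * X * ∑ b, C (c b) *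
        (nodal (univ.erase b) u * (nodal (univ.erase b) u).comp (C q * X))
      = ∑ b, C (c b) * (C (q - 1) * X *
          (nodal (univ.erase b) u * (nodal (univ.erase b) u).comp (C q * X))) := by
        rw [mul_sum]
        exact sum_congr rfl fun b _ => by ring
    _ = Pq * ∑ b, C (c b) * nodal (univ.erase b) u -
          P * ∑ b, C (c b) * (nodal (univ.erase b) u).comp (C q * X) := by
        simp only [hsplit, mul_sum, ← sum_sub_distrib]
        exact sum_congr rfl fun b _ => by ring
    _ = X ^ k * (Pq - C (q ^ k) * P) := by
        rw [← X_pow_eq_sum hu hk, ← hlag_comp, mul_pow, C_pow]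
        ring

open Lagrange in
theorem coeff_sum_nodal_erase_mul_comp {u : Fin n → K} (hu : Function.Injective u)
    {k : ℕ} (hk : k < n) {q : K} (hq : q ≠ 1) (j : ℕ) :
    (∑ b, C (u b ^ k / ∏ i ∈ univ.erase b, (u b - u i)) *
        (nodal (univ.erase b) u * (nodal (univ.erase b) u).comp (C q * X))).coeff j =
      if k ≤ j + 1 then (q ^ (j + 1 - k) - q ^ k) / (q - 1) * (nodal univ u).coeff (j + 1 - k)
      else 0 := by
  have h := congrArg (coeff · (j + 1)) (C_mul_X_mul_sum_nodal_erase_mul_comp hu hk q)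
  simp only [mul_assoc, coeff_C_mul, coeff_X_mul, coeff_X_pow_mul', coeff_sub,
    comp_C_mul_X_coeff] at h
  rw [← mul_right_inj' (sub_ne_zero.2 hq), h]
  split_ifs
  · field_simp [sub_ne_zero.2 hq]
  · rw [mul_zero]

noncomputable def lascouxQ (q : ℂ) (u : Fin n → ℂ) : Matrix (Fin (2 * n - 1)) (Fin n) ℂ :=
  Matrix.of fun j k =>
    ((q ^ ((((j : ℤ) + 1) - ((k : ℤ) + 1)) + 1) - q ^ (((k : ℤ) + 1) - 1)) / (q - 1)) *
      (-1 : ℂ) ^ ((n : ℤ) - ((j : ℤ) + 1) + ((k : ℤ) + 1) - 1) *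
      esymZ u ((n : ℤ) - ((j : ℤ) + 1) + ((k : ℤ) + 1) - 1)

theorem lascouxQ_apply (q : ℂ) (u : Fin n → ℂ) (j : Fin (2 * n - 1)) (k : Fin n) :
    lascouxQ q u j k =
      if (k : ℕ) ≤ j + 1 then
        (q ^ (j + 1 - k : ℕ) - q ^ (k : ℕ)) / (q - 1) * (Lagrange.nodal univ u).coeff (j + 1 - k)
      else 0 := by
  have hexp : (n : ℤ) - ((j : ℤ) + 1) + ((k : ℤ) + 1) - 1 = n - (((j : ℕ) : ℤ) + 1 - (k : ℕ)) := by
    ring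
  rw [lascouxQ, Matrix.of_apply, hexp, show ((k : ℤ) + 1) - 1 = ((k : ℕ) : ℤ) by ring,
    zpow_natCast]
  split_ifs with hkj
  · rw [coeff_nodal_univ_eq_esymZ,
      show (((j : ℤ) + 1) - ((k : ℤ) + 1)) + 1 = ((j + 1 - k : ℕ) : ℤ) by omega, zpow_natCast,
      show ((j : ℕ) : ℤ) + 1 - (k : ℕ) = ((j + 1 - k : ℕ) : ℤ) by omega]
    ring
  · rw [esymZ, if_neg (by omega), esymVal_eq_zero_of_lt u (by omega), mul_zero]

open Lagrange in
theorem sum_pow_mul_lascouxQ {u : Fin n → ℂ} (hu : Function.Injective u) {q : ℂ} (hq : q ≠ 1)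
    (x : ℂ) (k : Fin n) :
    ∑ j : Fin (2 * n - 1), x ^ (j : ℕ) * lascouxQ q u j k =
      ∑ b, (∏ i ∈ univ.erase b, (x - u i) * (q * x - u i)) *
        (u b ^ (k : ℕ) / ∏ i ∈ univ.erase b, (u b - u i)) := by
  set R := ∑ b, C (u b ^ (k : ℕ) / ∏ i ∈ univ.erase b, (u b - u i)) *
    (nodal (univ.erase b) u * (nodal (univ.erase b) u).comp (C q * X))
  have hcoeff := coeff_sum_nodal_erase_mul_comp hu k.2 hq
  have hdeg : R.natDegree < 2 * n - 1 := by
    have : R.natDegree ≤ 2 * n - 2 := natDegree_le_iff_coeff_eq_zero.2 fun N hN => by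
      rw [hcoeff]
      split_ifs
      · rw [coeff_eq_zero_of_natDegree_lt (by simp [natDegree_nodal]; omega), mul_zero]
      · rfl
    have := k.pos
    omega
  calc ∑ j : Fin (2 * n - 1), x ^ (j : ℕ) * lascouxQ q u j k
      = ∑ j ∈ range (2 * n - 1), R.coeff j * x ^ j := by
        rw [← Fin.sum_univ_eq_sum_range (fun j => R.coeff j * x ^ j)]
        exact sum_congr rfl fun j _ => by rw [hcoeff, lascouxQ_apply, mul_comm]
    _ = eval x R := (eval_eq_sum_range' hdeg x).symm
    _ = _ := by
        simp only [R, eval_finsetSum, eval_mul, eval_C, eval_comp, eval_X, eval_nodal,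
          prod_mul_distrib]
        exact sum_congr rfl fun b _ => by ring

theorem Fin.prod_prod_erase_eq_mul {M : Type*} [CommMonoid M] (f : Fin n → Fin n → M) :
    ∏ l, ∏ m ∈ univ.erase l, f l m = (∏ i, ∏ j ∈ Ioi i, f i j) * ∏ i, ∏ j ∈ Ioi i, f j i := by
  have hsplit : ∀ l : Fin n, univ.erase l = Iio l ∪ Ioi l := fun l => by
    ext m
    simp [lt_or_lt_iff_ne]
  have hdisj : ∀ l : Fin n, Disjoint (Iio l) (Ioi l) := fun l =>
    disjoint_left.2 fun m h1 h2 => lt_asymm (mem_Iio.1 h1) (mem_Ioi.1 h2)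
  have hswap : ∏ l, ∏ m ∈ Iio l, f l m = ∏ i, ∏ j ∈ Ioi i, f j i := prod_comm' (by simp)
  simp only [hsplit, prod_union (hdisj _), prod_mul_distrib]
  rw [hswap, mul_comm]

theorem Fin.prod_filter_lt_eq_prod_Ioi {M : Type*} [CommMonoid M] (f : Fin n → Fin n → M) :
    ∏ p ∈ univ.filter (fun p : Fin n × Fin n => p.1 < p.2), f p.1 p.2 =
      ∏ i, ∏ j ∈ Ioi i, f i j :=
  prod_finset_product' _ _ _ (by simp)

theorem Fin.prod_Ioi_sub_swap {R : Type*} [CommRing R] (x : Fin n → R) :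
    ∏ i, ∏ j ∈ Ioi i, (x j - x i) = (-1) ^ (n * (n - 1) / 2) * ∏ i, ∏ j ∈ Ioi i, (x i - x j) := by
  have hcard : #(univ.filter fun p : Fin n × Fin n => p.1 < p.2) = n * (n - 1) / 2 := by
    rw [Fintype.card_product_filter_lt, Fintype.card_fin, Nat.choose_two_right]
  rw [← prod_filter_lt_eq_prod_Ioi, ← prod_filter_lt_eq_prod_Ioi (fun i j => x i - x j),
    ← hcard, ← Finset.prod_const, ← prod_mul_distrib]
  exact prod_congr rfl fun p _ => by ring

theorem det_of_pow_rev_div_prod_erase {v : Fin n → K} (hv : Function.Injective v) :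
    (Matrix.of fun i l : Fin n => v l ^ (n - 1 - (i : ℕ)) / ∏ m ∈ univ.erase l, (v l - v m)).det =
      (∏ i, ∏ j ∈ Ioi i, (v j - v i))⁻¹ := by
  have hfac : (Matrix.of fun i l : Fin n => v l ^ (n - 1 - (i : ℕ)) /
      ∏ m ∈ univ.erase l, (v l - v m)) = (Matrix.projVandermonde 1 v).transpose *
        Matrix.diagonal fun l => (∏ m ∈ univ.erase l, (v l - v m))⁻¹ := by
    ext i l
    simp [Matrix.mul_diagonal, Matrix.projVandermonde, Matrix.rectVandermonde, div_eq_mul_inv,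
      Nat.sub_sub, add_comm 1]
  have hD : ∏ i, ∏ j ∈ Ioi i, (v i - v j) ≠ 0 :=
    prod_ne_zero_iff.2 fun i _ => prod_ne_zero_iff.2 fun j hj =>
      sub_ne_zero.2 (hv.ne (ne_of_lt (mem_Ioi.1 hj)))
  rw [hfac, Matrix.det_mul, Matrix.det_transpose, Matrix.det_projVandermonde, Matrix.det_diagonal,
    prod_inv_distrib, Fin.prod_prod_erase_eq_mul]
  simp only [Pi.one_apply, one_mul]
  rw [mul_inv, mul_inv_cancel_left₀ hD]

theorem det_of_pow_div_prod_erase {u : Fin n → K} (hu : Function.Injective u) :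
    (Matrix.of fun b k : Fin n => u b ^ (k : ℕ) / ∏ i ∈ univ.erase b, (u b - u i)).det =
      (∏ i, ∏ j ∈ Ioi i, (u i - u j))⁻¹ := by
  have hfac : (Matrix.of fun b k : Fin n => u b ^ (k : ℕ) / ∏ i ∈ univ.erase b, (u b - u i)) =
      Matrix.diagonal (fun b => (∏ i ∈ univ.erase b, (u b - u i))⁻¹) * Matrix.vandermonde u := by
    ext b k
    simp [Matrix.diagonal_mul, Matrix.vandermonde_apply, div_eq_mul_inv, mul_comm]
  rw [hfac, Matrix.det_mul, Matrix.det_diagonal, Matrix.det_vandermonde, prod_inv_distrib,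
    Fin.prod_prod_erase_eq_mul, mul_inv, inv_mul_cancel_right₀
      (Matrix.det_vandermonde u ▸ Matrix.det_vandermonde_ne_zero_iff.2 hu)]

theorem Matrix.of_prod_erase_eq_diagonal_mul {ι : Type*} [Fintype ι] [DecidableEq ι]
    {g : ι → ι → K} (hg : ∀ l b, g l b ≠ 0) :
    Matrix.of (fun l b => ∏ i ∈ univ.erase b, g l i) =
      Matrix.diagonal (fun l => ∏ i, g l i) * Matrix.of fun l b => 1 / g l b := by
  ext l b
  rw [Matrix.diagonal_mul, Matrix.of_apply, Matrix.of_apply, ← mul_prod_erase univ _ (mem_univ b),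
    one_div, mul_comm (g l b), mul_inv_cancel_right₀ (hg l b)]

noncomputable def lascouxP (v : Fin n → ℂ) : Matrix (Fin n) (Fin (2 * n - 1)) ℂ :=
  Matrix.of fun i j => hsymZ v (((j : ℤ) + 1) - ((i : ℤ) + 1))

theorem lascouxP_eq_mul {v : Fin n → ℂ} (hv : Function.Injective v) :
    lascouxP v =
      (Matrix.of fun i l : Fin n => v l ^ (n - 1 - (i : ℕ)) / ∏ m ∈ univ.erase l, (v l - v m)) *
        Matrix.of fun l (j : Fin (2 * n - 1)) => v l ^ (j : ℕ) := by
  ext i j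
  simp only [lascouxP, Matrix.mul_apply, Matrix.of_apply, div_mul_eq_mul_div, ← pow_add]
  rw [sum_pow_div_prod_erase_sub_eq_hsymZ hv i.pos]
  congr 1
  have := i.is_lt
  omega

theorem of_pow_mul_lascouxQ {u : Fin n → ℂ} (hu : Function.Injective u) {q : ℂ} (hq : q ≠ 1)
    (v : Fin n → ℂ) :
    (Matrix.of fun l (j : Fin (2 * n - 1)) => v l ^ (j : ℕ)) * lascouxQ q u =
      (Matrix.of fun l b => ∏ i ∈ univ.erase b, (v l - u i) * (q * v l - u i)) *
        Matrix.of fun b k : Fin n => u b ^ (k : ℕ) / ∏ i ∈ univ.erase b, (u b - u i) := by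
  ext l k
  simpa only [Matrix.mul_apply, Matrix.of_apply] using sum_pow_mul_lascouxQ hu hq (v l) k

theorem lascoux_formula_general (n : ℕ) (q : ℂ) (hq : q ≠ 1)
    (v u : Fin n → ℂ)
    (hv : ∀ i j : Fin n, i ≠ j → v i ≠ v j)
    (hu : ∀ i j : Fin n, i ≠ j → u i ≠ u j)
    (hvu : ∀ i j : Fin n, v i ≠ u j)
    (hqvu : ∀ i j : Fin n, q * v i ≠ u j) :
    (-1 : ℂ) ^ (n * (n - 1) / 2) *
      (Matrix.of fun i j : Fin n => 1 / ((v i - u j) * (q * v i - u j))).det *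
      (∏ i : Fin n, ∏ j : Fin n, (v i - u j) * (q * v i - u j)) /
      ((∏ p ∈ Finset.univ.filter (fun p : Fin n × Fin n => p.1 < p.2), (v p.1 - v p.2)) *
       (∏ p ∈ Finset.univ.filter (fun p : Fin n × Fin n => p.1 < p.2), (u p.1 - u p.2))) =
    ((Matrix.of fun (i : Fin n) (j : Fin (2 * n - 1)) =>
        hsymZ v (((j : ℤ) + 1) - ((i : ℤ) + 1))) *
     (Matrix.of fun (j : Fin (2 * n - 1)) (k : Fin n) =>
        ((q ^ ((((j : ℤ) + 1) - ((k : ℤ) + 1)) + 1) - q ^ (((k : ℤ) + 1) - 1)) / (q - 1)) *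
          (-1 : ℂ) ^ ((n : ℤ) - ((j : ℤ) + 1) + ((k : ℤ) + 1) - 1) *
          esymZ u ((n : ℤ) - ((j : ℤ) + 1) + ((k : ℤ) + 1) - 1))).det := by
  have hvI : Function.Injective v := fun i j h => by_contra fun hij => hv i j hij h
  have huI : Function.Injective u := fun i j h => by_contra fun hij => hu i j hij h
  have hfactor : ∀ l b, (v l - u b) * (q * v l - u b) ≠ 0 := fun l b =>
    mul_ne_zero (sub_ne_zero.2 (hvu l b)) (sub_ne_zero.2 (hqvu l b))
  change _ = (lascouxP v * lascouxQ q u).det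
  rw [lascouxP_eq_mul hvI, Matrix.mul_assoc, of_pow_mul_lascouxQ huI hq,
    Matrix.of_prod_erase_eq_diagonal_mul hfactor, Matrix.det_mul, Matrix.det_mul, Matrix.det_mul,
    Matrix.det_diagonal, det_of_pow_rev_div_prod_erase hvI, det_of_pow_div_prod_erase huI,
    Fin.prod_Ioi_sub_swap, Fin.prod_filter_lt_eq_prod_Ioi (fun i j => v i - v j),
    Fin.prod_filter_lt_eq_prod_Ioi (fun i j => u i - u j), mul_inv, ← inv_pow, inv_neg_one]
  ring

theorem lascoux_formula (n : ℕ) (hn : 1 ≤ n) (q : ℂ) (hq : q ≠ 1)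
    (v u : Fin n → ℂ)
    (hv : ∀ i j : Fin n, i ≠ j → v i ≠ v j)
    (hu : ∀ i j : Fin n, i ≠ j → u i ≠ u j)
    (hvu : ∀ i j : Fin n, v i ≠ u j)
    (hqvu : ∀ i j : Fin n, q * v i ≠ u j) :
    (-1 : ℂ) ^ (n * (n - 1) / 2) *
      (Matrix.of fun i j : Fin n => 1 / ((v i - u j) * (q * v i - u j))).det *
      (∏ i : Fin n, ∏ j : Fin n, (v i - u j) * (q * v i - u j)) /
      ((∏ p ∈ Finset.univ.filter (fun p : Fin n × Fin n => p.1 < p.2), (v p.1 - v p.2)) *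
       (∏ p ∈ Finset.univ.filter (fun p : Fin n × Fin n => p.1 < p.2), (u p.1 - u p.2))) =
    ((Matrix.of fun (i : Fin n) (j : Fin (2 * n - 1)) =>
        hsymZ v (((j : ℤ) + 1) - ((i : ℤ) + 1))) *
     (Matrix.of fun (j : Fin (2 * n - 1)) (k : Fin n) =>
        ((q ^ ((((j : ℤ) + 1) - ((k : ℤ) + 1)) + 1) - q ^ (((k : ℤ) + 1) - 1)) / (q - 1)) *
          (-1 : ℂ) ^ ((n : ℤ) - ((j : ℤ) + 1) + ((k : ℤ) + 1) - 1) *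
          esymZ u ((n : ℤ) - ((j : ℤ) + 1) + ((k : ℤ) + 1) - 1))).det :=
  lascoux_formula_general n q hq v u hv hu hvu hqvu
end
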